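/- For γ > 0 define s_γ = γ(5γ²+5γ+1)/(8(1+2γ)²(1+4γ)²(3+4γ)), t_γ = −γ²/(16(1+2γ)(1+4γ)²(3+4γ)), and z_γ = γ³/(8(1+2γ)²(1+4γ)²(3+4γ)), and let D_γ be the symmetric 6×6 real matrix whose (m,n) entry equals s_γ if m = n, equals z_γ if m + n = 7, and equals t_γ otherwise. Then det(D_γ) = γ⁶(γ+1)⁴ / (2¹⁸ (2γ+1)⁹ (4γ+1)⁷ (4γ+3)⁶), which is strictly positive for every γ > 0. -/

import Mathlib

/-! Pairing each index `m` with its mirror `5 - m` puts the pattern matrix into the block form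
`[[A, B], [B, A]]`, where the `3 × 3` blocks `A` and `B` carry `s` resp. `z` on the diagonal and
`t` off it. Hence `det D = det (A + B) * det (A - B) = (s + z + 4t) (s + z - 2t)² (s - z)³`, and
for `D_γ` each of the three factors is an explicit positive rational function of `γ`. -/

noncomputable section

def sG (γ : ℝ) : ℝ :=
  γ * (5 * γ ^ 2 + 5 * γ + 1) / (8 * (1 + 2 * γ) ^ 2 * (1 + 4 * γ) ^ 2 * (3 + 4 * γ))

def tG (γ : ℝ) : ℝ := -(γ ^ 2) / (16 * (1 + 2 * γ) * (1 + 4 * γ) ^ 2 * (3 + 4 * γ))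

def zG (γ : ℝ) : ℝ := γ ^ 3 / (8 * (1 + 2 * γ) ^ 2 * (1 + 4 * γ) ^ 2 * (3 + 4 * γ))

/-- The matrix `D_γ` of the purely volumetric Dirichlet enrichment functionals: entry
`(m,n)` equals `s_γ` on the diagonal, `z_γ` on the anti-diagonal (`m + n = 7` in 1-based
indexing, i.e. `m + n = 5` for `Fin 6`), and `t_γ` otherwise. -/
def Dvol (γ : ℝ) : Matrix (Fin 6) (Fin 6) ℝ :=
  Matrix.of fun m n : Fin 6 =>
    if m = n then sG γ else if (m : ℕ) + (n : ℕ) = 5 then zG γ else tG γ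

namespace Matrix

variable {R : Type*}

def diagOffDiag (n : Type*) [DecidableEq n] (a b : R) : Matrix n n R :=
  of fun i j => if i = j then a else b

section CommRing

variable [CommRing R]

theorem det_fromBlocks_eq_det_add_mul_det_sub {n : Type*} [Fintype n] [DecidableEq n]
    (A B : Matrix n n R) :
    (fromBlocks A B B A).det = (A + B).det * (A - B).det := by
  have htri : fromBlocks 1 0 (-1) 1 * fromBlocks A B B A * fromBlocks 1 0 1 1 =
      fromBlocks (A + B) B 0 (A - B) := by
    simp only [fromBlocks_multiply]
    congr 1 <;> noncomm_ring
  simpa [det_fromBlocks_zero₁₂, det_fromBlocks_zero₂₁] using congrArg det htri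

theorem diagOffDiag_add {n : Type*} [DecidableEq n] (a b c d : R) :
    diagOffDiag n a b + diagOffDiag n c d = diagOffDiag n (a + c) (b + d) := by
  ext i j; by_cases h : i = j <;> simp [diagOffDiag, h]

theorem diagOffDiag_sub {n : Type*} [DecidableEq n] (a b c d : R) :
    diagOffDiag n a b - diagOffDiag n c d = diagOffDiag n (a - c) (b - d) := by
  ext i j; by_cases h : i = j <;> simp [diagOffDiag, h]

theorem det_diagOffDiag_fin_three (a b : R) :
    (diagOffDiag (Fin 3) a b).det = (a - b) ^ 2 * (a + 2 * b) := by
  simp [diagOffDiag, det_fin_three]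
  ring

end CommRing

end Matrix

open Matrix

variable {R : Type*}

def crossPattern (s t z : R) : Matrix (Fin 6) (Fin 6) R :=
  of fun m n => if m = n then s else if (m : ℕ) + n = 5 then z else t

-- `inl i ↦ i` and `inr i ↦ 5 - i`
def finSumRevEquiv : Fin 3 ⊕ Fin 3 ≃ Fin 6 :=
  (Equiv.sumCongr (Equiv.refl _) Fin.revPerm).trans finSumFinEquiv

theorem crossPattern_submatrix_finSumRevEquiv (s t z : R) :
    (crossPattern s t z).submatrix finSumRevEquiv finSumRevEquiv =
      fromBlocks (diagOffDiag _ s t) (diagOffDiag _ z t)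
        (diagOffDiag _ z t) (diagOffDiag _ s t) := by
  ext (i | i) (j | j) <;> fin_cases i <;> fin_cases j <;> rfl

theorem det_crossPattern [CommRing R] (s t z : R) :
    (crossPattern s t z).det = (s + z + 4 * t) * (s + z - 2 * t) ^ 2 * (s - z) ^ 3 := by
  rw [← det_submatrix_equiv_self finSumRevEquiv, crossPattern_submatrix_finSumRevEquiv,
    det_fromBlocks_eq_det_add_mul_det_sub, diagOffDiag_add, diagOffDiag_sub,
    det_diagOffDiag_fin_three, det_diagOffDiag_fin_three]
  ring

theorem sG_add_zG_add_four_mul_tG {γ : ℝ} (hγ : 0 ≤ γ) :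
    sG γ + zG γ + 4 * tG γ =
      γ * (γ + 1) / (8 * (2 * γ + 1) * (4 * γ + 1) ^ 2 * (4 * γ + 3)) := by
  rw [sG, zG, tG]
  field_simp
  ring

theorem sG_add_zG_sub_two_mul_tG {γ : ℝ} (hγ : 0 ≤ γ) :
    sG γ + zG γ - 2 * tG γ = γ / (8 * (2 * γ + 1) * (4 * γ + 1) * (4 * γ + 3)) := by
  rw [sG, zG, tG]
  field_simp
  ring

theorem sG_sub_zG {γ : ℝ} (hγ : 0 ≤ γ) :
    sG γ - zG γ = γ * (γ + 1) / (8 * (2 * γ + 1) ^ 2 * (4 * γ + 1) * (4 * γ + 3)) := by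
  rw [sG, zG]
  field_simp
  ring

/-- Determinant formula for `D_γ`: strictly positive for every `γ > 0`. -/
theorem Dvol_det (γ : ℝ) (hγ : 0 < γ) :
    (Dvol γ).det =
        γ ^ 6 * (γ + 1) ^ 4 /
          (2 ^ 18 * (2 * γ + 1) ^ 9 * (4 * γ + 1) ^ 7 * (4 * γ + 3) ^ 6) ∧
      0 < (Dvol γ).det := by
  have hdet : (Dvol γ).det =
      γ ^ 6 * (γ + 1) ^ 4 /
        (2 ^ 18 * (2 * γ + 1) ^ 9 * (4 * γ + 1) ^ 7 * (4 * γ + 3) ^ 6) := by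
    rw [show Dvol γ = crossPattern (sG γ) (tG γ) (zG γ) from rfl, det_crossPattern,
      sG_add_zG_add_four_mul_tG hγ.le, sG_add_zG_sub_two_mul_tG hγ.le, sG_sub_zG hγ.le]
    field_simp
    ring
  exact ⟨hdet, hdet ▸ by positivity⟩

end
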